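/- Let m, n be positive integers with n ≥ 2m, m > 1, and s := ⌊log₂(n/m)⌋, and let M be a product of s matrices each equal to [[1,0],[1,1]] or [[0,1],[-1,2]]. Then the matrix M·[[-1,1],[0,1]]·M⁻¹ is involutory (its square is the identity), the induced map on M·F_m ⊂ F_n is an order-reversing bijection of M·F_m onto itself, and the fraction M·[1;2] is a fixed point of this map. -/

import Mathlib

/-!
Write `M` for the product. Since `R` acts as `q ↦ 1 - q`, the matrix `M R M⁻¹` sends `M·q` to
`M·(1 - q)`, and `q ↦ 1 - q` is an order-reversing involution of `F_m` fixing `1/2`. What remains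
is that `M` is an increasing map on `[0, 1]`: both `[[1,0],[1,1]]` and `[[0,1],[-1,2]]` have
determinant `1` and preserve the cone `{(h, k) : 0 ≤ h ≤ k, 0 < k}`, so `M` does too, and a
Möbius map of positive determinant whose denominator stays positive on `[0, 1]` is increasing
there.
-/

/-- The Farey sequence of order `n`, as the set of (automatically reduced)
rationals `h/k` with `0 ≤ h ≤ k ≤ n`. -/
def farey (n : ℕ) : Set ℚ := {q | 0 ≤ q ∧ q ≤ 1 ∧ q.den ≤ n}

/-- `F_n^m = {h/k ∈ F_n : h ≤ m}`. -/
def fareyF (n m : ℕ) : Set ℚ := {q ∈ farey n | q.num ≤ (m : ℤ)}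

/-- `G_n^m = {h/k ∈ F_n : m + k - n ≤ h}`. -/
def fareyG (n m : ℕ) : Set ℚ := {q ∈ farey n | (m : ℤ) + q.den - n ≤ q.num}

/-- `F(B(n),m) = {h/k ∈ F_n : m + k - n ≤ h ≤ m}`. -/
def fareyB (n m : ℕ) : Set ℚ :=
  {q ∈ farey n | (m : ℤ) + q.den - n ≤ q.num ∧ q.num ≤ (m : ℤ)}


/-- Action of an integer 2×2 matrix on a fraction `h/k` written as the column
vector `[h; k]`. -/
def matAct (S : Matrix (Fin 2) (Fin 2) ℤ) (q : ℚ) : ℚ :=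
  ((S 0 0 * q.num + S 0 1 * (q.den : ℤ) : ℤ) : ℚ) /
    ((S 1 0 * q.num + S 1 1 * (q.den : ℤ) : ℤ) : ℚ)

/-- The matrix `[[1,0],[1,1]]`. -/
def matA : Matrix (Fin 2) (Fin 2) ℤ := !![1, 0; 1, 1]

/-- The matrix `[[0,1],[-1,2]]`. -/
def matB : Matrix (Fin 2) (Fin 2) ℤ := !![0, 1; -1, 2]

/-- The matrix `[[-1,1],[0,1]]`. -/
def matR : Matrix (Fin 2) (Fin 2) ℤ := !![-1, 1; 0, 1]

open Matrix

lemma matAct_eq (S : Matrix (Fin 2) (Fin 2) ℤ) (x : ℚ) :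
    matAct S x = ((S 0 0 : ℚ) * x + S 0 1) / ((S 1 0 : ℚ) * x + S 1 1) := by
  have hk : (x.den : ℚ) ≠ 0 := by positivity
  have hx : (x.num : ℚ) = x * x.den := (Rat.mul_den_eq_num x).symm
  rw [matAct, ← div_div_div_cancel_right₀ hk]
  congr 1 <;> push_cast <;> rw [hx] <;> field_simp

lemma matAct_mul (S T : Matrix (Fin 2) (Fin 2) ℤ) {q : ℚ}
    (hq : (T 1 0 : ℚ) * q + T 1 1 ≠ 0) :
    matAct S (matAct T q) = matAct (S * T) q := by
  set D : ℚ := (T 1 0 : ℚ) * q + T 1 1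
  have h (a b N : ℚ) : a * (N / D) + b = (a * N + b * D) / D := by field_simp
  simp only [matAct_eq, h, div_div_div_cancel_right₀ hq, mul_apply, Fin.sum_univ_two,
    Int.cast_add, Int.cast_mul, D]
  congr 1 <;> ring

lemma matAct_matR (q : ℚ) : matAct matR q = 1 - q := by
  rw [matAct_eq]
  norm_num [matR]
  ring

lemma matR_mul_self : matR * matR = 1 := by
  rw [matR, mul_fin_two, one_fin_two]
  norm_num

lemma matAct_lt_matAct {M : Matrix (Fin 2) (Fin 2) ℤ} (hdet : 0 < M.det) {p q : ℚ}
    (hp : 0 < (M 1 0 : ℚ) * p + M 1 1) (hq : 0 < (M 1 0 : ℚ) * q + M 1 1) (hpq : p < q) :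
    matAct M p < matAct M q := by
  rw [matAct_eq, matAct_eq, div_lt_div_iff₀ hp hq]
  have hdet' : (0 : ℚ) < M 0 0 * M 1 1 - M 0 1 * M 1 0 := by
    rw [det_fin_two] at hdet
    exact_mod_cast hdet
  nlinarith [mul_pos hdet' (sub_pos.2 hpq)]

def unitCone : Set (Fin 2 → ℤ) := {v | 0 ≤ v 0 ∧ v 0 ≤ v 1 ∧ 0 < v 1}

def coneMonoid : Submonoid (Matrix (Fin 2) (Fin 2) ℤ) where
  carrier := {M | M.det = 1 ∧ Set.MapsTo (M *ᵥ ·) unitCone unitCone}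
  mul_mem' := by
    rintro M N ⟨hMdet, hM⟩ ⟨hNdet, hN⟩
    refine ⟨by rw [det_mul, hMdet, hNdet, one_mul], fun v hv => ?_⟩
    simpa only [← mulVec_mulVec] using hM (hN hv)
  one_mem' := ⟨det_one, fun v hv => by simpa using hv⟩

lemma matA_mem_coneMonoid : matA ∈ coneMonoid := by
  refine ⟨by simp [matA, det_fin_two_of], fun v ⟨h0, h1, h2⟩ => ?_⟩
  refine ⟨?_, ?_, ?_⟩ <;> simp [matA, mulVec, dotProduct] <;> omega

lemma matB_mem_coneMonoid : matB ∈ coneMonoid := by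
  refine ⟨by simp [matB, det_fin_two_of], fun v ⟨h0, h1, h2⟩ => ?_⟩
  refine ⟨?_, ?_, ?_⟩ <;> simp [matB, mulVec, dotProduct] <;> omega

lemma matAct_den_pos {M : Matrix (Fin 2) (Fin 2) ℤ} (hM : M ∈ coneMonoid) {q : ℚ}
    (hq : q ∈ Set.Icc 0 1) : 0 < (M 1 0 : ℚ) * q + M 1 1 := by
  have hv : ![q.num, (q.den : ℤ)] ∈ unitCone := by
    refine ⟨by simpa using Rat.num_nonneg.2 hq.1, ?_, by simpa using q.pos⟩
    simpa using Rat.num_le_denom_iff.2 hq.2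
  have hpos : (0 : ℤ) < M 1 0 * q.num + M 1 1 * q.den := by
    simpa [mulVec, dotProduct, Fin.sum_univ_two] using (hM.2 hv).2.2
  have hscale :
      ((M 1 0 * q.num + M 1 1 * q.den : ℤ) : ℚ) = q.den * ((M 1 0 : ℚ) * q + M 1 1) := by
    push_cast
    rw [← Rat.mul_den_eq_num q]
    ring
  exact pos_of_mul_pos_right (hscale ▸ Int.cast_pos.2 hpos) (Nat.cast_nonneg _)

lemma strictMonoOn_matAct {M : Matrix (Fin 2) (Fin 2) ℤ} (hM : M ∈ coneMonoid) :
    StrictMonoOn (matAct M) (Set.Icc 0 1) := fun _ hp _ hq hpq =>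
  matAct_lt_matAct (hM.1 ▸ one_pos) (matAct_den_pos hM hp) (matAct_den_pos hM hq) hpq

lemma matAct_conj_matR {M : Matrix (Fin 2) (Fin 2) ℤ} (hM : M ∈ coneMonoid) {q : ℚ}
    (hq : q ∈ Set.Icc 0 1) : matAct (M * matR * M⁻¹) (matAct M q) = matAct M (1 - q) := by
  have hMR : M * matR * M⁻¹ * M = M * matR := by
    rw [Matrix.mul_assoc, nonsing_inv_mul _ (hM.1 ▸ isUnit_one), Matrix.mul_one]
  rw [matAct_mul _ _ (matAct_den_pos hM hq).ne', hMR,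
    ← matAct_mul _ _ (by norm_num [matR]), matAct_matR]

lemma conj_mul_self_eq_one {n α : Type*} [Fintype n] [DecidableEq n] [CommRing α]
    {M R : Matrix n n α} (hM : IsUnit M.det) (hR : R * R = 1) :
    (M * R * M⁻¹) * (M * R * M⁻¹) = 1 := by
  simp only [Matrix.mul_assoc]
  rw [nonsing_inv_mul_cancel_left M _ hM, ← Matrix.mul_assoc R, hR, Matrix.one_mul,
    mul_nonsing_inv _ hM]

lemma farey_subset_Icc (m : ℕ) : farey m ⊆ Set.Icc 0 1 := fun _ hq => ⟨hq.1, hq.2.1⟩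

lemma one_sub_mem_farey {m : ℕ} {q : ℚ} (hq : q ∈ farey m) : 1 - q ∈ farey m := by
  obtain ⟨h0, h1, hden⟩ := hq
  refine ⟨by linarith, by linarith, ?_⟩
  simpa using (Rat.intCast_sub_den 1 q).trans_le hden

theorem stmt17_general (m : ℕ)
    (LM : List (Matrix (Fin 2) (Fin 2) ℤ))
    (hLMmem : ∀ X ∈ LM, X = matA ∨ X = matB) :
    (LM.prod * matR * (LM.prod)⁻¹) * (LM.prod * matR * (LM.prod)⁻¹) = 1 ∧
    Set.BijOn (matAct (LM.prod * matR * (LM.prod)⁻¹))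
      (matAct LM.prod '' farey m) (matAct LM.prod '' farey m) ∧
    (∀ x ∈ matAct LM.prod '' farey m, ∀ y ∈ matAct LM.prod '' farey m,
      x < y → matAct (LM.prod * matR * (LM.prod)⁻¹) y <
        matAct (LM.prod * matR * (LM.prod)⁻¹) x) ∧
    matAct (LM.prod * matR * (LM.prod)⁻¹) (matAct LM.prod (1 / 2)) =
      matAct LM.prod (1 / 2) := by
  set M := LM.prod
  have hM : M ∈ coneMonoid := Submonoid.list_prod_mem _ fun X hX => by
    rcases hLMmem X hX with rfl | rfl
    exacts [matA_mem_coneMonoid, matB_mem_coneMonoid]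
  have hIcc := farey_subset_Icc m
  have hmono := strictMonoOn_matAct hM
  have hconj {q} (hq : q ∈ farey m) := matAct_conj_matR hM (hIcc hq)
  have hmaps :
      Set.MapsTo (matAct (M * matR * M⁻¹)) (matAct M '' farey m) (matAct M '' farey m) := by
    rintro _ ⟨q, hq, rfl⟩
    exact ⟨1 - q, one_sub_mem_farey hq, (hconj hq).symm⟩
  have hinv : Set.LeftInvOn (matAct (M * matR * M⁻¹)) (matAct (M * matR * M⁻¹))
      (matAct M '' farey m) := by
    rintro _ ⟨q, hq, rfl⟩
    rw [hconj hq, hconj (one_sub_mem_farey hq), sub_sub_cancel]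
  refine ⟨conj_mul_self_eq_one (hM.1 ▸ isUnit_one) matR_mul_self,
    Set.InvOn.bijOn ⟨hinv, hinv⟩ hmaps hmaps, ?_, ?_⟩
  · rintro _ ⟨p, hp, rfl⟩ _ ⟨q, hq, rfl⟩ hpq
    rw [hconj hp, hconj hq]
    exact hmono (hIcc (one_sub_mem_farey hq)) (hIcc (one_sub_mem_farey hp))
      (sub_lt_sub_left ((hmono.lt_iff_lt (hIcc hp) (hIcc hq)).1 hpq) 1)
  · rw [matAct_conj_matR hM ⟨by norm_num, by norm_num⟩]
    norm_num

/-- Theorem `th:7`, last claim: `M·R·M⁻¹` is involutory and induces an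
order-reversing bijection of `M·F_m` onto itself with fixed point `M·[1;2]`. -/
theorem stmt17 (m n : ℕ) (hm : 1 < m) (hn : 2 * m ≤ n)
    (LM : List (Matrix (Fin 2) (Fin 2) ℤ))
    (hLM : LM.length = Nat.log 2 (n / m))
    (hLMmem : ∀ X ∈ LM, X = matA ∨ X = matB) :
    (LM.prod * matR * (LM.prod)⁻¹) * (LM.prod * matR * (LM.prod)⁻¹) = 1 ∧
    Set.BijOn (matAct (LM.prod * matR * (LM.prod)⁻¹))
      (matAct LM.prod '' farey m) (matAct LM.prod '' farey m) ∧
    (∀ x ∈ matAct LM.prod '' farey m, ∀ y ∈ matAct LM.prod '' farey m,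
      x < y → matAct (LM.prod * matR * (LM.prod)⁻¹) y <
        matAct (LM.prod * matR * (LM.prod)⁻¹) x) ∧
    matAct (LM.prod * matR * (LM.prod)⁻¹) (matAct LM.prod (1 / 2)) =
      matAct LM.prod (1 / 2) :=
  stmt17_general m LM hLMmem
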